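/- arXiv:1809.03053 — 4 statements merged into one kernel-verified Lean document; each statement's English description precedes it below -/
import Mathlib

section
/- Let K be an arbitrary index set and A a nonempty subset of ℝ^K with the product topology. A point e ∈ ℝ^K lies in the closed convex hull of A if and only if for every finite subset Γ of K, e|_Γ lies in the closed convex hull of A|_Γ in ℝ^Γ. -/
open Topology


/-- For a nonempty `A ⊆ ℝ^K` (product topology), `e` lies in the closed
convex hull of `A` iff for every finite `Γ ⊆ K`, `e|_Γ` lies in the closed convex hull
of `A|_Γ` in `ℝ^Γ`. -/
theorem stmt1 {K : Type*} (A : Set (K → ℝ)) (hA : A.Nonempty) (e : K → ℝ) :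
    e ∈ closure (convexHull ℝ A) ↔
      ∀ Γ : Finset K,
        (fun k : Γ => e k) ∈
          closure (convexHull ℝ ((fun f : K → ℝ => fun k : Γ => f k) '' A)) := by
  constructor
  · intro he Γ
    let L : (K → ℝ) →ₗ[ℝ] (Γ → ℝ) := LinearMap.pi fun k : Γ => LinearMap.proj (k : K)
    have hcont : Continuous L := by
      exact continuous_pi fun k => continuous_apply (k : K)
    have h1 : (fun k : Γ => e k) ∈ L '' closure (convexHull ℝ A) := ⟨e, he, rfl⟩
    have h2 : L '' closure (convexHull ℝ A) ⊆ closure (L '' convexHull ℝ A) :=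
      image_closure_subset_closure_image hcont
    have h3 := h2 h1
    have heq : (fun f : K → ℝ => fun k : Γ => f k) '' A = L '' A := rfl
    rw [heq, ← L.image_convexHull]
    exact h3
  · intro h
    rw [mem_closure_iff_nhds]
    intro s hs
    rw [nhds_pi, Filter.mem_pi'] at hs
    obtain ⟨Γ, t, ht, hsub⟩ := hs
    have hΓ := h Γ
    rw [mem_closure_iff_nhds] at hΓ
    have hnhds : (Set.pi Set.univ fun k : Γ => t (k : K)) ∈ 𝓝 (fun k : Γ => e k) :=
      set_pi_mem_nhds Set.finite_univ fun k _ => ht (k : K)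
    obtain ⟨g, hg1, hg2⟩ := hΓ _ hnhds
    let L : (K → ℝ) →ₗ[ℝ] (Γ → ℝ) := LinearMap.pi fun k : Γ => LinearMap.proj (k : K)
    have : (fun f : K → ℝ => fun k : Γ => f k) '' A = L '' A := rfl
    rw [this, ← L.image_convexHull] at hg2
    obtain ⟨c, hc, rfl⟩ := hg2
    refine ⟨c, hsub ?_, hc⟩
    intro k hk
    exact hg1 ⟨k, hk⟩ (Set.mem_univ _)
end

section
/- Let Γ be a finite set and Q a nonempty subset of the Euclidean space ℝ^Γ. If a point e lies in the closed convex hull of Q, then there is no point e* ∈ ℝ^Γ such that for all q ∈ Q, dist(q, e*) < dist(q, e). -/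
/-!
The points at least as close to `e*` as to `e` form a closed half-space bounded by the
perpendicular bisector of `e` and `e*`. If `e*` beats `e` on `Q`, this half-space contains `Q`,
hence the closed convex hull of `Q`, hence `e`; so `dist e e* ≤ dist e e = 0`, and `e* = e`
cannot be strictly closer to any point of the nonempty set `Q`.
-/

open RealInnerProductSpace

section

variable {E : Type*} [NormedAddCommGroup E] [InnerProductSpace ℝ E]

theorem setOf_dist_le_dist_eq (a b : E) :
    {x | dist x a ≤ dist x b} = {x | ⟪b - a, x⟫ ≤ (‖b‖ ^ 2 - ‖a‖ ^ 2) / 2} := by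
  ext x
  simp only [Set.mem_ofPred_eq, dist_eq_norm]
  rw [← sq_le_sq₀ (norm_nonneg _) (norm_nonneg _), norm_sub_sq_real, norm_sub_sq_real,
    inner_sub_left, real_inner_comm a, real_inner_comm b]
  constructor <;> intro h <;> linarith

theorem convex_setOf_dist_le_dist (a b : E) : Convex ℝ {x | dist x a ≤ dist x b} := by
  rw [setOf_dist_le_dist_eq]
  exact convex_halfSpace_le (innerₗ E (b - a)).isLinear _

theorem dist_le_dist_of_mem_closure_convexHull {Q : Set E} {a b x : E}
    (hQ : ∀ q ∈ Q, dist q a ≤ dist q b) (hx : x ∈ closure (convexHull ℝ Q)) :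
    dist x a ≤ dist x b :=
  closure_minimal (convexHull_min hQ (convex_setOf_dist_le_dist a b))
    (isClosed_le (continuous_id.dist continuous_const) (continuous_id.dist continuous_const)) hx

end

/-- In Euclidean space `ℝ^Γ` (Γ finite), if `e` lies in the closed convex
hull of a nonempty `Q`, then no point `e*` is strictly closer than `e` to every `q ∈ Q`. -/
theorem stmt2 {Γ : Type*} [Fintype Γ] (Q : Set (EuclideanSpace ℝ Γ)) (hQ : Q.Nonempty)
    (e : EuclideanSpace ℝ Γ) (he : e ∈ closure (convexHull ℝ Q)) :
    ¬ ∃ estar : EuclideanSpace ℝ Γ, ∀ q ∈ Q, dist q estar < dist q e := by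
  rintro ⟨estar, hcloser⟩
  have h : dist e estar ≤ dist e e :=
    dist_le_dist_of_mem_closure_convexHull (fun q hq ↦ (hcloser q hq).le) he
  rw [dist_self, dist_le_zero] at h
  obtain ⟨q, hq⟩ := hQ
  exact (hcloser q hq).ne (by rw [h])
end

section
/- Let K be an index set and Q a nonempty subset of ℝ^K, and suppose Q is finitely convexly protected: for every finite Γ ⊆ K, no point of the closed convex hull of Q|_Γ that extends to a point of the closed convex hull of Q (in ℝ^K) is exposed relative to the convex hull of Q|_Γ. Then an estimate function e ∈ ℝ^K admits no Dutch book (i.e., there is no finite Γ ⊆ K and s ∈ ℝ^Γ with ⟪s, q|_Γ⟫ < ⟪s, e|_Γ⟫ for all q ∈ Q) if and only if e lies in the closed convex hull of Q in ℝ^K. -/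
/-!
Restricting to a finite set `Γ` of coordinates is linear, so it commutes with convex hulls, and
in the product topology a point lies in the closure of a set once each of its finite restrictions
lies in the closure of the restricted set. So if `e` is not in the closed convex hull of `Q`, then
for some `Γ` the point `e|_Γ` is strictly separated from the convex hull of `Q|_Γ`, and the
separating vector is a Dutch book. Conversely, a Dutch book `s` against a point `e` of the closed
convex hull of `Q` exposes `e|_Γ` relative to the convex hull of `Q|_Γ` (`s ≠ 0` as `Q ≠ ∅`),
which finite convex protection forbids.
-/

open RealInnerProductSpace

theorem mem_closure_iff_forall_finset_restrict {ι : Type*} {X : ι → Type*}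
    [∀ i, TopologicalSpace (X i)] {S : Set (∀ i, X i)} {x : ∀ i, X i} :
    x ∈ closure S ↔ ∀ Γ : Finset ι, Γ.restrict x ∈ closure (Γ.restrict '' S) := by
  refine ⟨fun hx Γ => mem_closure_image Γ.continuous_restrict.continuousAt hx, fun h => ?_⟩
  rw [mem_closure_iff_nhds]
  intro t ht
  rw [nhds_pi, Filter.mem_pi] at ht
  obtain ⟨I, hI, V, hV, hVt⟩ := ht
  have hbox : Set.univ.pi (fun k : hI.toFinset => V k) ∈ nhds (hI.toFinset.restrict x) :=
    set_pi_mem_nhds Set.finite_univ fun k _ => hV k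
  obtain ⟨_, hy, c, hcS, rfl⟩ := mem_closure_iff_nhds.1 (h hI.toFinset) _ hbox
  exact ⟨c, hVt fun i hi => hy ⟨i, hI.mem_toFinset.2 hi⟩ trivial, hcS⟩

section EuclideanRestrict

variable {K : Type*}

noncomputable def euclideanRestrict (Γ : Finset K) : (K → ℝ) →L[ℝ] EuclideanSpace ℝ Γ :=
  (PiLp.continuousLinearEquiv 2 ℝ fun _ : Γ => ℝ).symm.toContinuousLinearMap.comp
    (ContinuousLinearMap.pi fun k : Γ => ContinuousLinearMap.proj (k : K))

theorem euclideanRestrict_eq_comp (Γ : Finset K) :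
    ⇑(euclideanRestrict Γ) = (PiLp.homeomorph 2 fun _ : Γ => ℝ).symm ∘ Γ.restrict := rfl

theorem mem_closure_iff_forall_euclideanRestrict {S : Set (K → ℝ)} {x : K → ℝ} :
    x ∈ closure S ↔
      ∀ Γ : Finset K, euclideanRestrict Γ x ∈ closure (euclideanRestrict Γ '' S) := by
  refine mem_closure_iff_forall_finset_restrict.trans (forall_congr' fun Γ => ?_)
  rw [euclideanRestrict_eq_comp, Set.image_comp, ← Homeomorph.image_closure, Function.comp_apply]
  exact (Homeomorph.injective _).mem_set_image.symm

theorem mem_closure_convexHull_iff_forall_euclideanRestrict {Q : Set (K → ℝ)} {x : K → ℝ} :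
    x ∈ closure (convexHull ℝ Q) ↔
      ∀ Γ : Finset K, euclideanRestrict Γ x ∈ closure (convexHull ℝ (euclideanRestrict Γ '' Q)) := by
  refine mem_closure_iff_forall_euclideanRestrict.trans (forall_congr' fun Γ => ?_)
  rw [← ContinuousLinearMap.coe_coe, LinearMap.image_convexHull]

end EuclideanRestrict

theorem exists_inner_lt_of_notMem_closure_convexHull {E : Type*} [NormedAddCommGroup E]
    [InnerProductSpace ℝ E] [CompleteSpace E] {s : Set E} {x : E}
    (hx : x ∉ closure (convexHull ℝ s)) : ∃ v : E, ∀ y ∈ s, ⟪v, y⟫ < ⟪v, x⟫ := by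
  obtain ⟨f, u, hfu, huf⟩ :=
    geometric_hahn_banach_closed_point (convex_convexHull ℝ s).closure isClosed_closure hx
  refine ⟨(InnerProductSpace.toDual ℝ E).symm f, fun y hy => ?_⟩
  simp only [InnerProductSpace.toDual_symm_apply]
  exact (hfu y (subset_closure (subset_convexHull ℝ s hy))).trans huf

theorem inner_lt_of_mem_convexHull {E : Type*} [NormedAddCommGroup E] [InnerProductSpace ℝ E]
    {s : Set E} {v : E} {r : ℝ} (hs : ∀ y ∈ s, ⟪v, y⟫ < r) {y : E} (hy : y ∈ convexHull ℝ s) :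
    ⟪v, y⟫ < r :=
  convexHull_min hs (convex_halfSpace_lt (innerSL ℝ v).isLinear r) hy

/-- If a nonempty `Q ⊆ ℝ^K` is finitely convexly protected (for each
finite `Γ ⊆ K`, no point of the closed convex hull of `Q|_Γ` that extends to a point of
the closed convex hull of `Q` is exposed relative to the convex hull of `Q|_Γ`), then
`e` admits no Dutch book iff `e` lies in the closed convex hull of `Q` in `ℝ^K`. -/
theorem stmt7 {K : Type*} (Q : Set (K → ℝ)) (hQ : Q.Nonempty)
    (hprot : ∀ Γ : Finset K, ¬ ∃ b : EuclideanSpace ℝ Γ,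
        b ∈ closure (convexHull ℝ ((fun f : K → ℝ => (WithLp.toLp 2 (fun k : Γ => f k) : EuclideanSpace ℝ Γ)) '' Q)) ∧
        (∃ a ∈ closure (convexHull ℝ Q), (WithLp.toLp 2 (fun k : Γ => a k) : EuclideanSpace ℝ Γ) = b) ∧
        (∃ s : EuclideanSpace ℝ Γ, s ≠ 0 ∧
          ∀ c ∈ convexHull ℝ ((fun f : K → ℝ => (WithLp.toLp 2 (fun k : Γ => f k) : EuclideanSpace ℝ Γ)) '' Q),
            ⟪s, c⟫ < ⟪s, b⟫))
    (e : K → ℝ) :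
    (¬ ∃ (Γ : Finset K) (s : EuclideanSpace ℝ Γ), ∀ q ∈ Q,
        ⟪s, (WithLp.toLp 2 (fun k : Γ => q k) : EuclideanSpace ℝ Γ)⟫ < ⟪s, (WithLp.toLp 2 (fun k : Γ => e k) : EuclideanSpace ℝ Γ)⟫) ↔
      e ∈ closure (convexHull ℝ Q) := by
  constructor
  · intro hnoBook
    refine mem_closure_convexHull_iff_forall_euclideanRestrict.2 fun Γ => ?_
    by_contra hΓ
    obtain ⟨s, hs⟩ := exists_inner_lt_of_notMem_closure_convexHull hΓ
    exact hnoBook ⟨Γ, s, fun q hq => hs _ ⟨q, hq, rfl⟩⟩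
  · rintro he ⟨Γ, s, hs⟩
    obtain ⟨q, hq⟩ := hQ
    refine hprot Γ ⟨euclideanRestrict Γ e,
      mem_closure_convexHull_iff_forall_euclideanRestrict.1 he Γ, ⟨e, he, rfl⟩, s, ?_, ?_⟩
    · rintro rfl
      simpa using hs q hq
    · exact fun c => inner_lt_of_mem_convexHull (Set.forall_mem_image.2 hs)
end

section
/- Let H be a finite-dimensional Hilbert space and let Q ⊆ ℝ^{E(B(H))} be the set of restrictions of vector states to the effects. Then an estimate function e : E(B(H)) → ℝ avoids a Dutch book (for every finite set Γ of effects and s ∈ ℝ^Γ there exists a unit vector x with Σ_{a∈Γ} s(a)(⟨x, a x⟩ - e(a)) ≥ 0) if and only if e is the restriction to the effects of some state on B(H) (equivalently, e(a) = Tr(ρ a) for some density operator ρ). -/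
open RealInnerProductSpace

section Stmt19Aux

variable {H : Type*} [NormedAddCommGroup H] [InnerProductSpace ℝ H] [FiniteDimensional ℝ H]

/-- The effects on `H`. -/
abbrev Stmt19Eff (H : Type*) [NormedAddCommGroup H] [InnerProductSpace ℝ H]
    [FiniteDimensional ℝ H] :=
  {a : H →L[ℝ] H // IsSelfAdjoint a ∧ ∀ y : H, (0:ℝ) ≤ ⟪y, a y⟫ ∧ ⟪y, a y⟫ ≤ ⟪y, y⟫}

lemma stmt19_trace_osum {n : ℕ} (b : OrthonormalBasis (Fin n) ℝ H) (f : H →ₗ[ℝ] H) :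
    LinearMap.trace ℝ H f = ∑ i, ⟪b i, f (b i)⟫ := by
  rw [LinearMap.trace_eq_matrix_trace ℝ b.toBasis f, Matrix.trace]
  congr 1
  ext i
  rw [Matrix.diag_apply, LinearMap.toMatrix_apply, b.coe_toBasis, b.coe_toBasis_repr_apply,
    b.repr_apply_apply]

/-- rank one operator `y ↦ ⟪u, y⟫ • u`. -/
noncomputable def stmt19Rk (u : H) : H →L[ℝ] H := (innerSL ℝ u).smulRight u

omit [FiniteDimensional ℝ H] in
lemma stmt19Rk_inner (u y z : H) : ⟪z, stmt19Rk u y⟫ = ⟪u, y⟫ * ⟪u, z⟫ := by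
  show ⟪z, ⟪u, y⟫ • u⟫ = _
  rw [real_inner_smul_right, real_inner_comm z u]

lemma stmt19Rk_effect (u : H) (hu : ‖u‖ = 1) : IsSelfAdjoint (stmt19Rk u) ∧
    ∀ y : H, (0:ℝ) ≤ ⟪y, stmt19Rk u y⟫ ∧ ⟪y, stmt19Rk u y⟫ ≤ ⟪y, y⟫ := by
  constructor
  · rw [ContinuousLinearMap.isSelfAdjoint_iff_isSymmetric]
    intro x y
    simp only [ContinuousLinearMap.coe_coe]
    show ⟪⟪u, x⟫ • u, y⟫ = ⟪x, stmt19Rk u y⟫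
    rw [stmt19Rk_inner, real_inner_smul_left, real_inner_comm x u]
    ring
  · intro y
    rw [stmt19Rk_inner]
    refine ⟨mul_self_nonneg _, ?_⟩
    calc ⟪u, y⟫ * ⟪u, y⟫ = |⟪u, y⟫| * |⟪u, y⟫| := (abs_mul_abs_self _).symm
      _ ≤ (‖u‖ * ‖y‖) * (‖u‖ * ‖y‖) := by
          nlinarith [abs_nonneg (⟪u, y⟫:ℝ), abs_real_inner_le_norm u y, norm_nonneg u,
            norm_nonneg y]
      _ = ⟪y, y⟫ := by rw [hu, real_inner_self_eq_norm_mul_norm]; ring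

lemma stmt19_antisym {n : ℕ} (g : Fin n → Fin n → ℝ) (h : ∀ i j, g i j = -g j i) :
    ∑ i, ∑ j, g i j = 0 := by
  have h1 : ∑ i, ∑ j, g i j = ∑ j, ∑ i, g i j := Finset.sum_comm
  have h2 : ∑ j : Fin n, ∑ i : Fin n, g i j = -∑ j : Fin n, ∑ i : Fin n, g j i := by
    rw [← Finset.sum_neg_distrib]
    refine Finset.sum_congr rfl fun j _ => ?_
    rw [← Finset.sum_neg_distrib]
    exact Finset.sum_congr rfl fun i _ => h i j
  have h3 : ∑ j : Fin n, ∑ i : Fin n, g j i = ∑ i : Fin n, ∑ j : Fin n, g i j := rfl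
  linarith [h1, h2, h3, h1.symm]

lemma stmt19_diag_split {n : ℕ} (f : Fin n → ℝ) (g : Fin n → Fin n → ℝ) :
    ∑ i, ∑ j, (if i = j then f i else g i j) =
      ∑ i, f i + ∑ i, ∑ j, (if i = j then 0 else g i j) := by
  rw [← Finset.sum_add_distrib]
  refine Finset.sum_congr rfl fun i _ => ?_
  have h : ∀ j, (if i = j then f i else g i j) =
      (if i = j then f i else 0) + (if i = j then 0 else g i j) := by
    intro j; split <;> simp
  rw [Finset.sum_congr rfl fun j _ => h j, Finset.sum_add_distrib, Finset.sum_ite_eq]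
  simp

lemma stmt19_magic {n : ℕ} (A r : Fin n → Fin n → ℝ) (q : Fin n → ℝ)
    (hA : ∀ i j, A i j = A j i) :
    ∑ i, ∑ j, (if i = j then (A i i - ∑ k, (if i = k then 0 else A i k)) * q i
        else A i j * (r i j + (q i + q j) / 2)) =
      ∑ i, ∑ j, (if i = j then A i i * q i else A i j * r i j) := by
  rw [← sub_eq_zero, ← Finset.sum_sub_distrib]
  have step1 : ∀ i : Fin n, (∑ j, (if i = j then (A i i - ∑ k, (if i = k then 0 else A i k)) * q i
        else A i j * (r i j + (q i + q j) / 2))) -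
      ∑ j, (if i = j then A i i * q i else A i j * r i j) =
      ∑ j, (if i = j then -((∑ k, (if i = k then 0 else A i k)) * q i)
        else A i j * ((q i + q j) / 2)) := by
    intro i
    rw [← Finset.sum_sub_distrib]
    refine Finset.sum_congr rfl fun j _ => ?_
    split <;> ring
  rw [Finset.sum_congr rfl fun i _ => step1 i, stmt19_diag_split]
  have step2 : ∑ i : Fin n, -((∑ k, (if i = k then 0 else A i k)) * q i) =
      ∑ i : Fin n, ∑ j : Fin n, (if i = j then 0 else -(A i j * q i)) := by
    refine Finset.sum_congr rfl fun i _ => ?_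
    rw [Finset.sum_mul, ← Finset.sum_neg_distrib]
    refine Finset.sum_congr rfl fun j _ => ?_
    split <;> ring
  rw [step2, ← Finset.sum_add_distrib]
  have step3 : ∀ i : Fin n, (∑ j : Fin n, (if i = j then 0 else -(A i j * q i))) +
      ∑ j : Fin n, (if i = j then 0 else A i j * ((q i + q j) / 2)) =
      ∑ j : Fin n, (if i = j then 0 else A i j * (q j - q i) / 2) := by
    intro i
    rw [← Finset.sum_add_distrib]
    refine Finset.sum_congr rfl fun j _ => ?_
    split <;> ring
  rw [Finset.sum_congr rfl fun i _ => step3 i]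
  apply stmt19_antisym
  intro i j
  by_cases h : i = j
  · subst h; simp
  · rw [if_neg h, if_neg (Ne.symm h), hA i j]; ring

lemma stmt19_exists_unit [Nontrivial H] (ρ : H →L[ℝ] H) (hsa : IsSelfAdjoint ρ)
    (hpos : ∀ y : H, (0:ℝ) ≤ ⟪y, ρ y⟫)
    (htr : LinearMap.trace ℝ H (ρ : H →ₗ[ℝ] H) = 1) (T : H →L[ℝ] H) :
    ∃ x : H, ‖x‖ = 1 ∧ LinearMap.trace ℝ H ((ρ ∘L T) : H →ₗ[ℝ] H) ≤ ⟪x, T x⟫ := by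
  have hsym : (ρ : H →ₗ[ℝ] H).IsSymmetric :=
    ContinuousLinearMap.isSelfAdjoint_iff_isSymmetric.mp hsa
  have hn : Module.finrank ℝ H = Module.finrank ℝ H := rfl
  set n := Module.finrank ℝ H with hndef
  let b : OrthonormalBasis (Fin n) ℝ H := hsym.eigenvectorBasis hn
  let μ : Fin n → ℝ := hsym.eigenvalues hn
  have hb : ∀ i, ρ (b i) = μ i • b i := fun i => hsym.apply_eigenvectorBasis hn i
  have hbn : ∀ i, ‖b i‖ = 1 := fun i => b.orthonormal.1 i
  have hbi : ∀ i, ⟪b i, b i⟫ = (1:ℝ) := by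
    intro i; rw [real_inner_self_eq_norm_mul_norm, hbn i]; norm_num
  have hμ : ∀ i, 0 ≤ μ i := by
    intro i
    have h := hpos (b i)
    rwa [hb i, real_inner_smul_right, hbi i, mul_one] at h
  have htr' : ∑ i, μ i = 1 := by
    rw [← htr, stmt19_trace_osum b]
    refine Finset.sum_congr rfl fun i _ => ?_
    simp only [ContinuousLinearMap.coe_coe]
    rw [hb i, real_inner_smul_right, hbi i, mul_one]
  have key : LinearMap.trace ℝ H ((ρ ∘L T) : H →ₗ[ℝ] H) = ∑ i, μ i * ⟪b i, T (b i)⟫ := by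
    rw [stmt19_trace_osum b]
    refine Finset.sum_congr rfl fun i _ => ?_
    simp only [ContinuousLinearMap.coe_coe, ContinuousLinearMap.comp_apply]
    rw [show (⟪b i, ρ (T (b i))⟫:ℝ) = ⟪ρ (b i), T (b i)⟫ from (hsym (b i) (T (b i))).symm,
      hb i, real_inner_smul_left]
  have hne : (Finset.univ : Finset (Fin n)).Nonempty := by
    have : 0 < n := Module.finrank_pos
    exact Finset.univ_nonempty_iff.mpr (Fin.pos_iff_nonempty.mp this)
  obtain ⟨i, _, hi⟩ := Finset.exists_max_image Finset.univ (fun i => (⟪b i, T (b i)⟫:ℝ)) hne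
  refine ⟨b i, hbn i, ?_⟩
  rw [key]
  calc ∑ j, μ j * ⟪b j, T (b j)⟫ ≤ ∑ j, μ j * ⟪b i, T (b i)⟫ := by
        refine Finset.sum_le_sum fun j _ => ?_
        exact mul_le_mul_of_nonneg_left (hi j (Finset.mem_univ j)) (hμ j)
    _ = ⟪b i, T (b i)⟫ := by rw [← Finset.sum_mul, htr', one_mul]

end Stmt19Aux

/-- For `H` a finite-dimensional Hilbert space, with `Q` the set of
vector-state restrictions to the effects, an estimate `e` on the effects avoids a Dutch
book (for every finite set `Γ` of effects and stakes `s` there is a unit vector `x`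
with `0 ≤ ∑_{a ∈ Γ} s a (⟪x, a x⟫ - e a)`) iff `e` is given by a state on `B(H)`,
i.e. `e a = Tr (ρ a)` for some density operator `ρ` (positive, self-adjoint, trace 1). -/
theorem stmt19 {H : Type*} [NormedAddCommGroup H] [InnerProductSpace ℝ H]
    [FiniteDimensional ℝ H] [Nontrivial H]
    (e : {a : H →L[ℝ] H // IsSelfAdjoint a ∧
        ∀ y : H, (0:ℝ) ≤ ⟪y, a y⟫ ∧ ⟪y, a y⟫ ≤ ⟪y, y⟫} → ℝ) :
    (∀ (Γ : Finset {a : H →L[ℝ] H // IsSelfAdjoint a ∧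
          ∀ y : H, (0:ℝ) ≤ ⟪y, a y⟫ ∧ ⟪y, a y⟫ ≤ ⟪y, y⟫})
        (s : {a : H →L[ℝ] H // IsSelfAdjoint a ∧
          ∀ y : H, (0:ℝ) ≤ ⟪y, a y⟫ ∧ ⟪y, a y⟫ ≤ ⟪y, y⟫} → ℝ),
        ∃ x : H, ‖x‖ = 1 ∧ 0 ≤ ∑ a ∈ Γ, s a * (⟪x, a.1 x⟫ - e a)) ↔
      ∃ ρ : H →L[ℝ] H, IsSelfAdjoint ρ ∧ (∀ y : H, (0:ℝ) ≤ ⟪y, ρ y⟫) ∧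
        LinearMap.trace ℝ H (ρ : H →ₗ[ℝ] H) = 1 ∧
        ∀ a, e a = LinearMap.trace ℝ H ((ρ ∘L a.1) : H →ₗ[ℝ] H) := by
  classical
  constructor
  · -- hard direction: Dutch-book avoidance gives a density operator
    intro hDB
    set n := Module.finrank ℝ H with hndef
    let b : OrthonormalBasis (Fin n) ℝ H := stdOrthonormalBasis ℝ H
    have hbn : ∀ i, ‖b i‖ = 1 := fun i => b.orthonormal.1 i
    have hbite : ∀ i j, ⟪b i, b j⟫ = if i = j then (1:ℝ) else 0 :=
      orthonormal_iff_ite.mp b.orthonormal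
    -- nonnegativity of e
    have epos : ∀ a : Stmt19Eff H, 0 ≤ e a := by
      intro a
      obtain ⟨x, hx, h⟩ := hDB {a} (fun _ => (-1:ℝ))
      rw [Finset.sum_singleton] at h
      have h2 := (a.2.2 x).1
      nlinarith
    -- zero linear combinations of quadratic forms give zero combinations of estimates
    have hlin : ∀ {ι : Type} [Fintype ι] (f : ι → Stmt19Eff H) (s : ι → ℝ),
        (∀ x : H, ∑ i, s i * ⟪x, (f i).1 x⟫ = 0) → ∑ i, s i * e (f i) = 0 := by
      intro ι _ f s hrel
      set Γ : Finset (Stmt19Eff H) := Finset.univ.image f with hΓ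
      set S : Stmt19Eff H → ℝ :=
        fun a => ∑ i ∈ Finset.univ.filter (fun i => f i = a), s i with hS
      have hfib : ∀ g : Stmt19Eff H → ℝ, ∑ a ∈ Γ, S a * g a = ∑ i, s i * g (f i) := by
        intro g
        rw [← Finset.sum_fiberwise_of_maps_to
          (fun i _ => Finset.mem_image_of_mem f (Finset.mem_univ i))
          (fun i => s i * g (f i))]
        refine Finset.sum_congr rfl fun a _ => ?_
        rw [hS, Finset.sum_mul]
        refine Finset.sum_congr rfl fun i hi => ?_
        rw [(Finset.mem_filter.mp hi).2]
      have expand : ∀ x : H, ∑ a ∈ Γ, S a * (⟪x, a.1 x⟫ - e a)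
          = - ∑ i, s i * e (f i) := by
        intro x
        have h1 : ∑ a ∈ Γ, S a * (⟪x, a.1 x⟫ - e a)
            = ∑ a ∈ Γ, S a * ⟪x, a.1 x⟫ - ∑ a ∈ Γ, S a * e a := by
          rw [← Finset.sum_sub_distrib]
          exact Finset.sum_congr rfl fun a _ => by ring
        rw [h1, hfib (fun a => ⟪x, a.1 x⟫), hfib e, hrel x, zero_sub]
      obtain ⟨x₁, _, h₁⟩ := hDB Γ S
      obtain ⟨x₂, _, h₂⟩ := hDB Γ (fun a => -S a)
      rw [expand x₁] at h₁
      have h₂' : ∑ a ∈ Γ, (fun a => -S a) a * (⟪x₂, a.1 x₂⟫ - e a)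
          = ∑ i, s i * e (f i) := by
        have h3 : ∑ a ∈ Γ, -S a * (⟪x₂, a.1 x₂⟫ - e a)
            = -∑ a ∈ Γ, S a * (⟪x₂, a.1 x₂⟫ - e a) := by
          rw [← Finset.sum_neg_distrib]
          exact Finset.sum_congr rfl fun a _ => by ring
        rw [h3, expand x₂, neg_neg]
      rw [h₂'] at h₂
      linarith
    -- key consequence: e respects pointwise-quadratic decompositions
    have hkey : ∀ (a : Stmt19Eff H) {ι : Type} [Fintype ι]
        (f : ι → Stmt19Eff H) (c : ι → ℝ),
        (∀ x : H, ⟪x, a.1 x⟫ = ∑ i, c i * ⟪x, (f i).1 x⟫) →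
        e a = ∑ i, c i * e (f i) := by
      intro a ι _ f c hc
      have h := hlin (fun o : Option ι => o.elim a f) (fun o => o.elim (-1) c) ?_
      · rw [Fintype.sum_option] at h
        simp only [Option.elim] at h
        linarith
      · intro x
        rw [Fintype.sum_option]
        simp only [Option.elim]
        rw [← hc x]; ring
    -- the identity effect
    have one_eff : IsSelfAdjoint (1 : H →L[ℝ] H) ∧
        ∀ y : H, (0:ℝ) ≤ ⟪y, (1 : H →L[ℝ] H) y⟫ ∧
          ⟪y, (1 : H →L[ℝ] H) y⟫ ≤ ⟪y, y⟫ := by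
      refine ⟨IsSelfAdjoint.one (H →L[ℝ] H), fun y => ?_⟩
      rw [ContinuousLinearMap.one_apply]
      exact ⟨real_inner_self_nonneg, le_refl _⟩
    set oneE : Stmt19Eff H := ⟨1, one_eff⟩ with honeE
    have eone : e oneE = 1 := by
      obtain ⟨x₁, hx₁, h₁⟩ := hDB {oneE} (fun _ => 1)
      obtain ⟨x₂, hx₂, h₂⟩ := hDB {oneE} (fun _ => -1)
      rw [Finset.sum_singleton] at h₁ h₂
      have e₁ : (⟪x₁, oneE.1 x₁⟫:ℝ) = 1 := by
        rw [honeE, ContinuousLinearMap.one_apply, real_inner_self_eq_norm_mul_norm, hx₁]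
        norm_num
      have e₂ : (⟪x₂, oneE.1 x₂⟫:ℝ) = 1 := by
        rw [honeE, ContinuousLinearMap.one_apply, real_inner_self_eq_norm_mul_norm, hx₂]
        norm_num
      rw [e₁] at h₁; rw [e₂] at h₂
      linarith
    -- the basic effects
    set U : Fin n → Fin n → H :=
      fun i j => if i = j then b i else (Real.sqrt 2)⁻¹ • (b i + b j) with hUdef
    have hs2 : Real.sqrt 2 * Real.sqrt 2 = 2 := Real.mul_self_sqrt (by norm_num)
    have hs2' : ((Real.sqrt 2)⁻¹ : ℝ) * (Real.sqrt 2)⁻¹ = 1/2 := by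
      rw [← mul_inv, hs2]; norm_num
    have hU1 : ∀ i j, ‖U i j‖ = 1 := by
      intro i j
      by_cases h : i = j
      · simp only [hUdef, if_pos h]; exact hbn i
      · simp only [hUdef, if_neg h]
        rw [norm_smul]
        have hsq : ‖b i + b j‖ ^ 2 = 2 := by
          rw [norm_add_sq_real, hbn, hbn, hbite i j]
          rw [if_neg h]; norm_num
        have hnb : ‖b i + b j‖ = Real.sqrt 2 := by
          rw [← Real.sqrt_sq (norm_nonneg _), hsq]
        rw [hnb, Real.norm_eq_abs, abs_of_nonneg (inv_nonneg.mpr (Real.sqrt_nonneg 2))]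
        exact inv_mul_cancel₀ (by positivity)
    have hUx : ∀ (i j : Fin n) (x : H), i ≠ j →
        ⟪U i j, x⟫ = (Real.sqrt 2)⁻¹ * (⟪b i, x⟫ + ⟪b j, x⟫) := by
      intro i j x h
      simp only [hUdef, if_neg h]
      rw [real_inner_smul_left, inner_add_left]
    have hUd : ∀ (i : Fin n) (x : H), ⟪U i i, x⟫ = ⟪b i, x⟫ := by
      intro i x; simp only [hUdef, if_pos rfl]
    set Q : Fin n → Fin n → Stmt19Eff H :=
      fun i j => ⟨stmt19Rk (U i j), stmt19Rk_effect _ (hU1 i j)⟩ with hQdef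
    set q : Fin n → ℝ := fun i => e (Q i i) with hqdef
    set M : Fin n → Fin n → ℝ :=
      fun i j => if i = j then q i else e (Q i j) - (q i + q j)/2 with hMdef
    have hQsym : ∀ i j, Q i j = Q j i := by
      intro i j
      by_cases h : i = j
      · rw [h]
      · refine Subtype.ext ?_
        simp only [hQdef]
        congr 1
        simp only [hUdef, if_neg h, if_neg (Ne.symm h)]
        rw [add_comm]
    have hMsym : ∀ i j, M i j = M j i := by
      intro i j
      by_cases h : i = j
      · rw [h]
      · simp only [hMdef, if_neg h, if_neg (Ne.symm h), hQsym i j]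
        ring
    -- the central identity: e is given by the matrix M
    have hstar : ∀ a : Stmt19Eff H,
        e a = ∑ i, ∑ j, M i j * ⟪b i, a.1 (b j)⟫ := by
      intro a
      have hsym := ContinuousLinearMap.isSelfAdjoint_iff_isSymmetric.mp a.2.1
      set A : Fin n → Fin n → ℝ := fun i j => ⟪b i, a.1 (b j)⟫ with hAdef
      have hAsym : ∀ i j, A i j = A j i := by
        intro i j
        simp only [hAdef]
        rw [show (⟪b i, a.1 (b j)⟫:ℝ) = ⟪a.1 (b i), b j⟫ from (hsym (b i) (b j)).symm,
          real_inner_comm]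
      have hAx : ∀ x : H, ⟪x, a.1 x⟫ = ∑ i, ∑ j, A i j * (⟪b i, x⟫ * ⟪b j, x⟫) := by
        intro x
        conv_lhs => rw [← b.sum_repr' x]
        rw [sum_inner]
        refine Finset.sum_congr rfl fun i _ => ?_
        rw [real_inner_smul_left, map_sum, inner_sum, Finset.mul_sum]
        refine Finset.sum_congr rfl fun j _ => ?_
        rw [map_smul, real_inner_smul_right]
        simp only [hAdef]
        ring
      set t : Fin n → ℝ := fun i => ∑ k, (if i = k then 0 else A i k) with htdef
      set c : Fin n → Fin n → ℝ := fun i j => if i = j then A i i - t i else A i j with hcdef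
      have hrel : ∀ x : H,
          ⟪x, a.1 x⟫ = ∑ p : Fin n × Fin n, c p.1 p.2 * ⟪x, (Q p.1 p.2).1 x⟫ := by
        intro x
        rw [Fintype.sum_prod_type]
        have term : ∀ i j, c i j * ⟪x, (Q i j).1 x⟫ =
            (if i = j then (A i i - t i) * (⟪b i, x⟫ * ⟪b i, x⟫)
             else A i j * ((⟪b i, x⟫ * ⟪b j, x⟫) +
               ((⟪b i, x⟫ * ⟪b i, x⟫) + (⟪b j, x⟫ * ⟪b j, x⟫)) / 2)) := by
          intro i j
          have hQx : (⟪x, (Q i j).1 x⟫:ℝ) = ⟪U i j, x⟫ * ⟪U i j, x⟫ := by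
            simp only [hQdef]
            exact stmt19Rk_inner (U i j) x x
          by_cases h : i = j
          · subst h
            rw [if_pos rfl, hQx, hUd]
            simp only [hcdef, if_pos rfl]
          · rw [if_neg h, hQx, hUx i j x h]
            simp only [hcdef, if_neg h]
            rw [show ((Real.sqrt 2)⁻¹ * (⟪b i, x⟫ + ⟪b j, x⟫)) *
                ((Real.sqrt 2)⁻¹ * (⟪b i, x⟫ + ⟪b j, x⟫)) =
                ((Real.sqrt 2)⁻¹ * (Real.sqrt 2)⁻¹) *
                ((⟪b i, x⟫ + ⟪b j, x⟫) * (⟪b i, x⟫ + ⟪b j, x⟫)) from by ring, hs2']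
            ring
        rw [Finset.sum_congr rfl fun i _ => Finset.sum_congr rfl fun j _ => term i j]
        rw [stmt19_magic A (fun i j => ⟪b i, x⟫ * ⟪b j, x⟫) (fun i => ⟪b i, x⟫ * ⟪b i, x⟫) hAsym]
        rw [hAx x]
        refine Finset.sum_congr rfl fun i _ => Finset.sum_congr rfl fun j _ => ?_
        by_cases h : i = j
        · subst h; rw [if_pos rfl]
        · rw [if_neg h]
      have hkey' := hkey a (fun p : Fin n × Fin n => Q p.1 p.2) (fun p => c p.1 p.2) hrel
      rw [Fintype.sum_prod_type] at hkey'
      rw [hkey']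
      have term2 : ∀ i j, c i j * e (Q i j) =
          (if i = j then (A i i - t i) * q i
           else A i j * ((e (Q i j) - (q i + q j)/2) + (q i + q j)/2)) := by
        intro i j
        by_cases h : i = j
        · subst h
          rw [if_pos rfl]
          simp only [hcdef, if_pos rfl, hqdef]
        · rw [if_neg h]
          simp only [hcdef, if_neg h]
          ring
      rw [Finset.sum_congr rfl fun i _ => Finset.sum_congr rfl fun j _ => term2 i j]
      rw [stmt19_magic A (fun i j => e (Q i j) - (q i + q j)/2) q hAsym]
      refine Finset.sum_congr rfl fun i _ => Finset.sum_congr rfl fun j _ => ?_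
      by_cases h : i = j
      · subst h; rw [if_pos rfl]; simp only [hMdef, if_pos rfl]; ring
      · rw [if_neg h]; simp only [hMdef, if_neg h]; ring
    -- define the density operator
    set K : Fin n → Fin n → (H →L[ℝ] H) :=
      fun i j => (innerSL ℝ (b j)).smulRight (b i) with hKdef
    set ρ : H →L[ℝ] H := ∑ i, ∑ j, M i j • K i j with hρdef
    have hρapp : ∀ y : H, ρ y = ∑ i, ∑ j, M i j • (⟪b j, y⟫ • b i) := by
      intro y
      rw [hρdef]
      rw [ContinuousLinearMap.sum_apply]
      refine Finset.sum_congr rfl fun i _ => ?_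
      rw [ContinuousLinearMap.sum_apply]
      refine Finset.sum_congr rfl fun j _ => ?_
      rw [ContinuousLinearMap.smul_apply]
      rfl
    have hρxy : ∀ x y : H, ⟪x, ρ y⟫ = ∑ i, ∑ j, M i j * (⟪b i, x⟫ * ⟪b j, y⟫) := by
      intro x y
      rw [hρapp, inner_sum]
      refine Finset.sum_congr rfl fun i _ => ?_
      rw [inner_sum]
      refine Finset.sum_congr rfl fun j _ => ?_
      rw [real_inner_smul_right, real_inner_smul_right, real_inner_comm x (b i)]
      ring
    refine ⟨ρ, ?_, ?_, ?_, ?_⟩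
    · -- self-adjoint
      rw [ContinuousLinearMap.isSelfAdjoint_iff_isSymmetric]
      intro x y
      simp only [ContinuousLinearMap.coe_coe]
      rw [show (⟪ρ x, y⟫:ℝ) = ⟪y, ρ x⟫ from real_inner_comm _ _, hρxy y x, hρxy x y,
        Finset.sum_comm]
      refine Finset.sum_congr rfl fun i _ => Finset.sum_congr rfl fun j _ => ?_
      rw [hMsym j i]
      ring
    · -- positive
      intro y
      by_cases hy : y = 0
      · subst hy; simp
      · have hny : ‖y‖ ≠ 0 := norm_ne_zero_iff.mpr hy
        set v : H := ‖y‖⁻¹ • y with hv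
        have hv1 : ‖v‖ = 1 := by
          rw [hv, norm_smul, Real.norm_eq_abs, abs_of_nonneg (inv_nonneg.mpr (norm_nonneg y))]
          exact inv_mul_cancel₀ hny
        have hyv : y = ‖y‖ • v := by
          rw [hv, smul_smul, mul_inv_cancel₀ hny, one_smul]
        have hvpos : (0:ℝ) ≤ ⟪v, ρ v⟫ := by
          have hval := hstar ⟨stmt19Rk v, stmt19Rk_effect v hv1⟩
          have hterm : ∀ i j : Fin n, M i j * ⟪b i, stmt19Rk v (b j)⟫
              = M i j * (⟪b i, v⟫ * ⟪b j, v⟫) := by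
            intro i j
            rw [stmt19Rk_inner v (b j) (b i), real_inner_comm v (b i), real_inner_comm v (b j)]
            ring
          rw [hρxy v v, ← Finset.sum_congr rfl fun i _ => Finset.sum_congr rfl
            fun j _ => hterm i j, ← hval]
          exact epos _
        have h6 : (⟪v, ρ v⟫:ℝ) = ‖y‖⁻¹ * (‖y‖⁻¹ * ⟪y, ρ y⟫) := by
          rw [hv, real_inner_smul_left, map_smul, real_inner_smul_right]
        rw [h6] at hvpos
        have hc : (0:ℝ) < ‖y‖⁻¹ * ‖y‖⁻¹ := by
          have : (0:ℝ) < ‖y‖ := lt_of_le_of_ne (norm_nonneg y) (Ne.symm hny)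
          positivity
        nlinarith
    · -- trace one
      have h1 : LinearMap.trace ℝ H (ρ : H →ₗ[ℝ] H) = ∑ i, ⟪b i, ρ (b i)⟫ :=
        stmt19_trace_osum b _
      rw [h1]
      have h2 : ∀ k : Fin n, (⟪b k, ρ (b k)⟫:ℝ) = M k k := by
        intro k
        rw [hρxy (b k) (b k)]
        simp only [hbite]
        simp [Finset.sum_ite_eq', Finset.sum_ite_eq]
      rw [Finset.sum_congr rfl fun k _ => h2 k]
      have h3 := hstar oneE
      rw [eone] at h3
      have h4 : ∀ i j : Fin n, M i j * ⟪b i, oneE.1 (b j)⟫ = if i = j then M i i else 0 := by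
        intro i j
        rw [honeE]
        simp only [ContinuousLinearMap.one_apply]
        rw [hbite i j]
        by_cases h : i = j
        · subst h; simp
        · rw [if_neg h, if_neg h, mul_zero]
      rw [Finset.sum_congr rfl fun i _ => Finset.sum_congr rfl fun j _ => h4 i j] at h3
      simp only [Finset.sum_ite_eq, Finset.mem_univ, if_pos] at h3
      rw [← h3]
    · -- trace formula
      intro a
      have h1 : LinearMap.trace ℝ H ((ρ ∘L a.1) : H →ₗ[ℝ] H)
          = ∑ k, ⟪b k, ρ (a.1 (b k))⟫ := by
        rw [stmt19_trace_osum b]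
        rfl
      have hsym := ContinuousLinearMap.isSelfAdjoint_iff_isSymmetric.mp a.2.1
      have h2 : ∀ k : Fin n, (⟪b k, ρ (a.1 (b k))⟫:ℝ) = ∑ j, M k j * ⟪b j, a.1 (b k)⟫ := by
        intro k
        rw [hρxy (b k) (a.1 (b k))]
        have : ∀ i j : Fin n, M i j * (⟪b i, b k⟫ * ⟪b j, a.1 (b k)⟫)
            = if i = k then M i j * ⟪b j, a.1 (b k)⟫ else 0 := by
          intro i j
          rw [hbite i k]
          by_cases h : i = k
          · subst h; simp
          · rw [if_neg h, if_neg h]; ring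
        rw [Finset.sum_congr rfl fun i _ => Finset.sum_congr rfl fun j _ => this i j]
        rw [Finset.sum_comm]
        simp [Finset.sum_ite_eq, Finset.sum_ite_eq']
      rw [h1, Finset.sum_congr rfl fun k _ => h2 k, hstar a]
      refine Finset.sum_congr rfl fun k _ => Finset.sum_congr rfl fun j _ => ?_
      rw [show (⟪b k, a.1 (b j)⟫:ℝ) = ⟪a.1 (b k), b j⟫ from (hsym (b k) (b j)).symm,
        real_inner_comm]
  · -- easy direction: a density operator avoids Dutch books
    rintro ⟨ρ, hsa, hpos, htr, he⟩ Γ s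
    let Tb : (H →L[ℝ] H) →ₗ[ℝ] ℝ :=
      { toFun := fun T => LinearMap.trace ℝ H ((ρ ∘L T) : H →ₗ[ℝ] H),
        map_add' := fun T S => by
          simp only [ContinuousLinearMap.comp_add, ContinuousLinearMap.coe_add, map_add],
        map_smul' := fun r T => by
          simp only [ContinuousLinearMap.comp_smul, ContinuousLinearMap.coe_smul, map_smul,
            RingHom.id_apply] }
    set T : H →L[ℝ] H := ∑ a ∈ Γ, s a • a.1 with hT
    obtain ⟨x, hx, hineq⟩ := stmt19_exists_unit ρ hsa hpos htr T
    refine ⟨x, hx, ?_⟩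
    have h1 : (⟪x, T x⟫:ℝ) = ∑ a ∈ Γ, s a * ⟪x, a.1 x⟫ := by
      rw [hT, ContinuousLinearMap.sum_apply, inner_sum]
      refine Finset.sum_congr rfl fun a _ => ?_
      rw [ContinuousLinearMap.smul_apply, real_inner_smul_right]
    have h2 : Tb T = ∑ a ∈ Γ, s a * Tb a.1 := by
      rw [hT, map_sum]
      refine Finset.sum_congr rfl fun a _ => ?_
      rw [map_smul, smul_eq_mul]
    have h3 : ∑ a ∈ Γ, s a * (⟪x, a.1 x⟫ - e a) = ⟪x, T x⟫ - Tb T := by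
      rw [h1, h2, ← Finset.sum_sub_distrib]
      refine Finset.sum_congr rfl fun a _ => ?_
      rw [he a]
      show s a * (⟪x, a.1 x⟫ - Tb a.1) = _
      ring
    rw [h3]
    have : Tb T ≤ ⟪x, T x⟫ := hineq
    linarith
end
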